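/- Let Γ be a connected spherical Coxeter matrix of small type, i.e. of type A_n (n ≥ 1), D_n (n ≥ 4), or E_n (n ∈ {6,7,8}), and let (f_i)_{i∈I} and (f'_i)_{i∈I} be two distinct LK-families, with associated LK-representations ψ, ψ' : B⁺ → End(V). Then ψ and ψ' are non-equivalent: there is no 𝔯-linear automorphism ν of V with ψ'_b = ν∘ψ_b∘ν⁻¹ for all b ∈ B⁺. -/

import Mathlib

set_option maxRecDepth 4000

namespace LK

/-! ### Coxeter matrices -/

/-- A Coxeter matrix on an index set `I` (entry `0` encodes `∞`). -/
structure CoxM (I : Type) where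
  m : I → I → ℕ
  symm : ∀ i j, m i j = m j i
  one_iff : ∀ i j, m i j = 1 ↔ i = j

variable {I : Type}

/-- A Coxeter matrix is of small type if all its entries belong to `{1,2,3}`. -/
def CoxM.Small (M : CoxM I) : Prop := ∀ i j, M.m i j = 1 ∨ M.m i j = 2 ∨ M.m i j = 3

/-- The alternating word `i j i j ⋯` with `k` letters. -/
def braidList (k : ℕ) (i j : I) : List I :=
  (List.range k).map (fun n => if n % 2 = 0 then i else j)

/-- The braid word `s_i s_j s_i ⋯` (`k` letters) in the free monoid. -/
def braidWord (k : ℕ) (i j : I) : FreeMonoid I := FreeMonoid.ofList (braidList k i j)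

/-- The braid relations defining the Artin–Tits monoid. -/
def artinRel (M : CoxM I) : FreeMonoid I → FreeMonoid I → Prop :=
  fun x y => ∃ i j, M.m i j ≠ 0 ∧ x = braidWord (M.m i j) i j ∧ y = braidWord (M.m i j) j i

/-- The congruence on the free monoid generated by the braid relations. -/
def artinCon (M : CoxM I) : Con (FreeMonoid I) := conGen (artinRel M)

/-- The Artin–Tits monoid `B⁺` of a Coxeter matrix. -/
def AM (M : CoxM I) := (artinCon M).Quotient

instance (M : CoxM I) : Monoid (AM M) := inferInstanceAs (Monoid (artinCon M).Quotient)

/-- The standard generators of the Artin–Tits monoid. -/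
def gen (M : CoxM I) (i : I) : AM M := (artinCon M).mk' (FreeMonoid.of i)

/-- `I(b) = {i ∈ I ∣ s_i ≼ b}`, where `≼` is left divisibility. -/
def IdxSet (M : CoxM I) (x : AM M) : Set I := {i | gen M i ∣ x}

/-- The braid word `s_i s_j s_i ⋯` (`k` letters) in the free group. -/
def braidWordG (k : ℕ) (i j : I) : FreeGroup I := ((braidList k i j).map FreeGroup.of).prod

/-- The braid relators defining the Artin–Tits group. -/
def artinGRels (M : CoxM I) : Set (FreeGroup I) :=
  {r | ∃ i j, M.m i j ≠ 0 ∧ r = braidWordG (M.m i j) i j * (braidWordG (M.m i j) j i)⁻¹}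

/-- The Artin–Tits group `B` of a Coxeter matrix. -/
def AG (M : CoxM I) := PresentedGroup (artinGRels M)

instance (M : CoxM I) : Group (AG M) := inferInstanceAs (Group (PresentedGroup _))

/-- The standard generators of the Artin–Tits group. -/
def ggen (M : CoxM I) (i : I) : AG M := PresentedGroup.of i

/-- The relators defining the Coxeter group. -/
def coxRels (M : CoxM I) : Set (FreeGroup I) :=
  {r | ∃ i j, M.m i j ≠ 0 ∧ r = (FreeGroup.of i * FreeGroup.of j) ^ (M.m i j)}

/-- The Coxeter group `W` of a Coxeter matrix. -/
def CoxG (M : CoxM I) := PresentedGroup (coxRels M)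

instance (M : CoxM I) : Group (CoxG M) := inferInstanceAs (Group (PresentedGroup _))

/-- A Coxeter matrix is spherical if its Coxeter group is finite. -/
def Spherical (M : CoxM I) : Prop := Finite (CoxG M)

/-- Connectedness of the Coxeter graph: there is an edge between `i` and `j`
iff `m i j ∉ {1,2}`. -/
def Connected (M : CoxM I) : Prop :=
  ∀ i j : I, Relation.ReflTransGen (fun a b => M.m a b ≠ 1 ∧ M.m a b ≠ 2) i j

/-- Restriction of a Coxeter matrix to a subset of the index set. -/
def CoxM.restrictF [DecidableEq I] (M : CoxM I) (J : Finset I) : CoxM {i // i ∈ J} :=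
  ⟨fun i j => M.m i j, fun i j => M.symm i j,
   fun i j => (M.one_iff i j).trans (by exact Subtype.coe_inj)⟩

/-- An irreducible affine Coxeter matrix: connected, non-spherical, but every proper
parabolic submatrix is spherical. -/
def Affine [Fintype I] [DecidableEq I] (M : CoxM I) : Prop :=
  Connected M ∧ ¬ Spherical M ∧ ∀ J : Finset I, J ≠ Finset.univ → Spherical (M.restrictF J)

/-! ### The standard root system -/

section Roots

variable [Fintype I] [DecidableEq I]

/-- The coefficients `-2 cos (π / m i j)` of the standard bilinear form. -/
noncomputable def cf (M : CoxM I) (i j : I) : ℝ := -2 * Real.cos (Real.pi / (M.m i j : ℝ))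

/-- The standard symmetric bilinear form `( · | · )` on `E = ⊕ ℝ α_i`. -/
noncomputable def bform (M : CoxM I) (x y : I → ℝ) : ℝ := ∑ i, ∑ j, x i * y j * cf M i j

/-- The simple root `α_i`. -/
def sroot (i : I) : I → ℝ := Pi.single i 1

/-- The simple reflection `s_i` acting on `E`. -/
noncomputable def srefl (M : CoxM I) (i : I) (v : I → ℝ) : I → ℝ :=
  v - bform M v (sroot i) • sroot i

/-- The roots: the orbit of the simple roots under the reflections. -/
inductive IsRoot (M : CoxM I) : (I → ℝ) → Prop
  | simple (i : I) : IsRoot M (sroot i)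
  | srefl (i : I) (v : I → ℝ) : IsRoot M v → IsRoot M (LK.srefl M i v)

/-- The positive roots: roots with nonnegative coordinates. -/
def IsPos (M : CoxM I) (v : I → ℝ) : Prop := IsRoot M v ∧ ∀ i, 0 ≤ v i

/-- The set `Φ⁺` of positive roots, as a type. -/
def Pos (M : CoxM I) := {v : I → ℝ // IsPos M v}

/-- The depth of a positive root: the least number of simple reflections needed to
send it to a negative vector. -/
noncomputable def dep (M : CoxM I) (v : I → ℝ) : ℕ :=
  sInf {n | ∃ l : List I, l.length = n ∧ ∃ k, l.foldr (srefl M) v k < 0}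

theorem isPos_sroot (M : CoxM I) (i : I) : IsPos M (sroot i) :=
  ⟨IsRoot.simple i, fun j => by rw [sroot, Pi.single_apply]; split <;> norm_num⟩

/-- The simple root `α_i` as a positive root. -/
def simplePos (M : CoxM I) (i : I) : Pos M := ⟨sroot i, isPos_sroot M i⟩

/-! ### The Lawrence–Krammer representation -/

variable (M : CoxM I) (R : Type) [CommRing R]

/-- The free module `V` with basis `(e_α)` indexed by the positive roots. -/
abbrev VV := Pos M →₀ R

/-- The basis vector `e_α` of `V`. -/
noncomputable def ev (α : Pos M) : VV M R := Finsupp.single α 1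

open scoped Classical in
/-- The value of the map `φ_i` on the basis vector indexed by `α`. -/
noncomputable def phiAux (a b c d : R) (i : I) (α : Pos M) : VV M R :=
  if α.1 = sroot i then 0
  else if srefl M i α.1 = α.1 then d • ev M R α
  else if h : IsPos M (srefl M i α.1) then
    if dep M α.1 < dep M (srefl M i α.1) then
      a • ev M R α + c • ev M R ⟨srefl M i α.1, h⟩
    else b • ev M R ⟨srefl M i α.1, h⟩
  else 0

/-- The linear map `φ_i : V → V`. -/
noncomputable def phi (a b c d : R) (i : I) : VV M R →ₗ[R] VV M R :=
  Finsupp.lift (VV M R) R (Pos M) (phiAux M R a b c d i)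

/-- The linear map `ψ_i = φ_i + f_i ⊠ e_{α_i}`. -/
noncomputable def psim (a b c d : R) (f : I → (VV M R →ₗ[R] R)) (i : I) :
    VV M R →ₗ[R] VV M R :=
  phi M R a b c d i + (f i).smulRight (ev M R (simplePos M i))

/-- LK-families. -/
structure IsLK (a b c d : R) (f : I → (VV M R →ₗ[R] R)) : Prop where
  diag : ∀ i j, i ≠ j → f i (ev M R (simplePos M j)) = 0
  rel2 : ∀ i j, M.m i j = 2 → (f i).comp (phi M R a b c d j) = d • f i
  rel3 : ∀ i j, M.m i j = 3 →
    (f i).comp (phi M R a b c d j) = (f j).comp (phi M R a b c d i)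

/-- The `R`-module `𝓕` of LK-families. -/
noncomputable def LKFamilies (a b c d : R) : Submodule R (I → (VV M R →ₗ[R] R)) where
  carrier := {f | IsLK M R a b c d f}
  add_mem' := by
    rintro f g ⟨hf1, hf2, hf3⟩ ⟨hg1, hg2, hg3⟩
    refine ⟨fun i j hij => ?_, fun i j hij => ?_, fun i j hij => ?_⟩
    · rw [Pi.add_apply, LinearMap.add_apply, hf1 i j hij, hg1 i j hij, add_zero]
    · simp only [Pi.add_apply, LinearMap.add_comp, hf2 i j hij, hg2 i j hij, smul_add]
    · simp only [Pi.add_apply, LinearMap.add_comp, hf3 i j hij, hg3 i j hij]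
  zero_mem' := by
    refine ⟨fun i j hij => ?_, fun i j hij => ?_, fun i j hij => ?_⟩
    · rw [Pi.zero_apply, LinearMap.zero_apply]
    · simp only [Pi.zero_apply, LinearMap.zero_comp, smul_zero]
    · simp only [Pi.zero_apply, LinearMap.zero_comp]
  smul_mem' := by
    rintro r f ⟨h1, h2, h3⟩
    refine ⟨fun i j hij => ?_, fun i j hij => ?_, fun i j hij => ?_⟩
    · rw [Pi.smul_apply, LinearMap.smul_apply, h1 i j hij, smul_zero]
    · rw [Pi.smul_apply, LinearMap.smul_comp, h2 i j hij]; exact smul_comm r d (f i)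
    · simp only [Pi.smul_apply, LinearMap.smul_comp, h3 i j hij]

end Roots

/-! ### The monoid of binary relations -/

/-- The monoid of binary relations on a set `Ω`, where `β (R * S) α ↔ ∃ γ, β R γ ∧ γ S α`. -/
def Bin (Ω : Type) := Ω → Ω → Prop

instance (Ω : Type) : Monoid (Bin Ω) where
  mul T S := fun x z => ∃ y, T x y ∧ S y z
  one := fun x y => x = y
  mul_assoc T S U := by
    funext x z
    apply propext
    constructor
    · rintro ⟨y, ⟨u, hTu, hSu⟩, hU⟩; exact ⟨u, hTu, y, hSu, hU⟩
    · rintro ⟨u, hT, y, hS, hU⟩; exact ⟨y, ⟨u, hT, hS⟩, hU⟩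
  one_mul T := by
    funext x z
    apply propext
    constructor
    · rintro ⟨y, rfl, h⟩; exact h
    · intro h; exact ⟨x, rfl, h⟩
  mul_one T := by
    funext x z
    apply propext
    constructor
    · rintro ⟨y, h, rfl⟩; exact h
    · intro h; exact ⟨z, h, rfl⟩

/-- `R(Ψ) = {β ∈ Ω ∣ ∃ α ∈ Ψ, β R α}`. -/
def Bin.image {Ω : Type} (T : Bin Ω) (Ψ : Set Ω) : Set Ω := {x | ∃ y ∈ Ψ, T x y}

/-! ### Further constructions -/

section More

variable [Fintype I] [DecidableEq I]

/-- The map `μ : 𝓕 → 𝔯` in the spherical case. -/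
noncomputable def muSph (M : CoxM I) (R : Type) [CommRing R] (a b c d : R) (i0 : I) :
    LKFamilies M R a b c d →ₗ[R] R where
  toFun f := f.1 i0 (ev M R (simplePos M i0))
  map_add' f g := rfl
  map_smul' r f := rfl

/-- A graph automorphism of a Coxeter matrix. -/
def IsAut (M : CoxM I) (g : Equiv.Perm I) : Prop := ∀ i j, M.m (g i) (g j) = M.m i j

/-- The action of a permutation of `I` on `E = ⊕ ℝ α_i`, sending `α_i` to `α_{g(i)}`. -/
def permE (g : Equiv.Perm I) (v : I → ℝ) : I → ℝ := fun i => v (g.symm i)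

open scoped Classical in
/-- The element of `Φ⁺` with given coordinates (junk value if the vector is not
a positive root). -/
noncomputable def posOf (M : CoxM I) [Nonempty I] (v : I → ℝ) : Pos M :=
  if h : IsPos M v then ⟨v, h⟩ else simplePos M (Classical.arbitrary I)

/-- The action of a permutation of `I` on `Φ⁺`. -/
noncomputable def permPos (M : CoxM I) [Nonempty I] (g : Equiv.Perm I) (α : Pos M) : Pos M :=
  posOf M (permE g α.1)

/-- The action of a permutation of `I` on `V`, permuting the basis `(e_α)`. -/
noncomputable def permV (M : CoxM I) (R : Type) [CommRing R] [Nonempty I] (g : Equiv.Perm I) :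
    VV M R →ₗ[R] VV M R :=
  Finsupp.lmapDomain R R (permPos M g)

/-- The submodule `V^G` of fixed points of `V` under a group `G` of permutations of `I`. -/
noncomputable def fixedV (M : CoxM I) (R : Type) [CommRing R] [Nonempty I]
    (G : Subgroup (Equiv.Perm I)) : Submodule R (VV M R) where
  carrier := {v | ∀ g ∈ G, permV M R g v = v}
  add_mem' hx hy g hg := by rw [map_add, hx g hg, hy g hg]
  zero_mem' g hg := map_zero _
  smul_mem' r v hv g hg := by rw [map_smul, hv g hg]

/-- The submonoid `(B⁺)^G` of fixed points of the Artin–Tits monoid under a group `G`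
of permutations of `I` (acting via `actB`). -/
def fixedB (M : CoxM I) (actB : Equiv.Perm I → (AM M →* AM M))
    (G : Subgroup (Equiv.Perm I)) : Submonoid (AM M) where
  carrier := {x | ∀ g ∈ G, actB g x = x}
  one_mem' g hg := map_one _
  mul_mem' hx hy g hg := by rw [map_mul, hx g hg, hy g hg]

/-- The map `μ : 𝓕 → 𝔯^ℕ` in the affine case, defined from the data of the imaginary
root `δ` and of a pair `(i0, j0)` with `m i0 j0 = 3`. -/
noncomputable def muAff (M : CoxM I) (R : Type) [CommRing R] [Nonempty I] (b c d : R)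
    (δ : I → ℝ) (i0 j0 : I) (f : I → (VV M R →ₗ[R] R)) : ℕ → R := fun n =>
  if n % 2 = 0 then f i0 (ev M R (posOf M ((n / 2 : ℕ) • δ + sroot i0)))
  else
    c * d * f i0 (ev M R (posOf M (((n + 1) / 2 : ℕ) • δ - sroot i0)))
      - b * c * f i0 (ev M R (posOf M (((n + 1) / 2 : ℕ) • δ - sroot i0 - sroot j0)))
      - d * d * f j0 (ev M R (posOf M (((n + 1) / 2 : ℕ) • δ - sroot i0 - sroot j0)))

end More

end LK

/-!
Conjugation preserves traces, and `ψ'_i - ψ_i = (f'_i - f_i) ⊠ e_{α_i}` has trace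
`(f'_i - f_i)(e_{α_i})`; as `Φ⁺` is finite, `V` is free of finite rank, so equivalent
LK-representations come from families agreeing on the simple roots. Their difference is an
LK-family vanishing on the simple roots, and such a family vanishes on every `e_α`, by induction
on the depth of `α`, applying the relations (ii) and (iii) at a descent of `α`.

Running this induction needs to know which of `α` and `s_k(α)` is deeper. For a simply-laced
finite Coxeter group the depth of a positive root is its height, and
`(α|α_k) ∈ {-1, 0, 1}` for `α ≠ α_k`; both come from `(α|β) ≤ 2` for roots, with equality only
when `α = β`, which holds because products of two reflections have finite order.
-/

theorem eq_zero_of_apply_eq_add_of_isOfFinOrder {K V : Type*} [Field K] [CharZero K]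
    [AddCommGroup V] [Module K V] {e : V ≃ₗ[K] V} (he : IsOfFinOrder e) {u w : V}
    (hu : e u = u) (hw : e w = w + u) : u = 0 := by
  have hpow : ∀ n : ℕ, (e ^ n) w = w + (n : K) • u := by
    intro n
    induction n with
    | zero => simp
    | succ n ih => rw [pow_succ', LinearEquiv.mul_apply, ih, map_add, map_smul, hw, hu]; module
  obtain ⟨n, hn, he1⟩ := he.exists_pow_eq_one
  have h := hpow n
  rw [he1, LinearEquiv.coe_one, id_eq, left_eq_add] at h
  exact (smul_eq_zero.mp h).resolve_left (Nat.cast_ne_zero.mpr hn.ne')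

theorem strictMono_of_chebyshev_recurrence {K : Type*} [CommRing K] [LinearOrder K]
    [IsStrictOrderedRing K] {u : ℕ → K} {s : K} (hs : 2 ≤ s)
    (hrec : ∀ n, u (n + 2) = s * u (n + 1) - u n) (h0 : 0 ≤ u 0) (h01 : u 0 < u 1) :
    StrictMono u := by
  have key : ∀ n, 0 ≤ u n ∧ u n < u (n + 1) := by
    intro n
    induction n with
    | zero => exact ⟨h0, h01⟩
    | succ n ih => exact ⟨by linarith, by rw [hrec]; nlinarith⟩
  exact strictMono_nat_of_lt_succ fun n => (key n).2

namespace LK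

variable {I : Type} {M : CoxM I}

theorem CoxM.m_self (M : CoxM I) (i : I) : M.m i i = 1 := (M.one_iff i i).mpr rfl

theorem CoxM.Small.m_eq_two_or_three (hs : M.Small) {i j : I} (h : i ≠ j) :
    M.m i j = 2 ∨ M.m i j = 3 :=
  (hs i j).resolve_left fun h1 => h ((M.one_iff i j).mp h1)

theorem cf_self (i : I) : cf M i i = 2 := by
  simp [cf, M.m_self]

theorem cf_comm (i j : I) : cf M i j = cf M j i := by
  rw [cf, cf, M.symm]

theorem cf_of_m_eq_two {i j : I} (h : M.m i j = 2) : cf M i j = 0 := by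
  simp [cf, h]

theorem cf_of_m_eq_three {i j : I} (h : M.m i j = 3) : cf M i j = -1 := by
  simp [cf, h]

theorem CoxM.Small.cf_nonpos (hs : M.Small) {i j : I} (h : i ≠ j) : cf M i j ≤ 0 := by
  rcases hs.m_eq_two_or_three h with h | h
  · rw [cf_of_m_eq_two h]
  · rw [cf_of_m_eq_three h]; norm_num

theorem CoxM.Small.exists_int_cf (hs : M.Small) (i j : I) : ∃ z : ℤ, cf M i j = z := by
  rcases hs i j with h | h | h
  · exact ⟨2, by rw [(M.one_iff i j).mp h, cf_self]; norm_num⟩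
  · exact ⟨0, by rw [cf_of_m_eq_two h]; norm_num⟩
  · exact ⟨-1, by rw [cf_of_m_eq_three h]; norm_num⟩

theorem sroot_self [DecidableEq I] (k : I) : sroot k k = 1 := Pi.single_eq_same k 1

variable [Fintype I]

theorem bform_comm (x y : I → ℝ) : bform M x y = bform M y x := by
  rw [bform, bform, Finset.sum_comm]
  refine Finset.sum_congr rfl fun i _ => Finset.sum_congr rfl fun j _ => ?_
  rw [cf_comm]; ring

theorem bform_add_left (x y z : I → ℝ) : bform M (x + y) z = bform M x z + bform M y z := by
  simp only [bform, Pi.add_apply, add_mul, Finset.sum_add_distrib]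

theorem bform_smul_left (r : ℝ) (x z : I → ℝ) : bform M (r • x) z = r * bform M x z := by
  simp only [bform, Pi.smul_apply, smul_eq_mul, Finset.mul_sum, mul_assoc]

theorem bform_sub_left (x y z : I → ℝ) : bform M (x - y) z = bform M x z - bform M y z := by
  simp only [bform, Pi.sub_apply, sub_mul, Finset.sum_sub_distrib]

theorem bform_neg_left (x z : I → ℝ) : bform M (-x) z = -bform M x z := by
  simp only [bform, Pi.neg_apply, neg_mul, Finset.sum_neg_distrib]

variable [DecidableEq I]

theorem bform_sroot_left (k : I) (v : I → ℝ) : bform M (sroot k) v = ∑ j, v j * cf M k j := by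
  simp [bform, sroot, Pi.single_apply, mul_comm]

theorem bform_sroot_sroot (i j : I) : bform M (sroot i) (sroot j) = cf M i j := by
  rw [bform_sroot_left]; simp [sroot, Pi.single_apply]

theorem bform_eq_sum_mul_bform_sroot (v w : I → ℝ) :
    bform M v w = ∑ l, v l * bform M w (sroot l) := by
  rw [bform]
  refine Finset.sum_congr rfl fun l _ => ?_
  rw [bform_comm, bform_sroot_left, Finset.mul_sum]
  refine Finset.sum_congr rfl fun j _ => ?_
  ring

theorem srefl_apply (k : I) (v : I → ℝ) (l : I) :
    srefl M k v l = v l - bform M v (sroot k) * sroot k l := rfl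

theorem bform_srefl_left (k : I) (x z : I → ℝ) :
    bform M (srefl M k x) z = bform M x z - bform M x (sroot k) * bform M (sroot k) z := by
  rw [srefl, bform_sub_left, bform_smul_left]

theorem bform_srefl_sroot (k : I) (x : I → ℝ) :
    bform M (srefl M k x) (sroot k) = -bform M x (sroot k) := by
  rw [bform_srefl_left, bform_sroot_sroot, cf_self]; ring

theorem bform_srefl_srefl (k : I) (x y : I → ℝ) :
    bform M (srefl M k x) (srefl M k y) = bform M x y := by
  rw [bform_srefl_left, bform_comm (sroot k), bform_srefl_sroot, bform_comm x,
    bform_srefl_left, bform_comm y, bform_comm (sroot k) x]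
  ring

theorem srefl_srefl (k : I) (v : I → ℝ) : srefl M k (srefl M k v) = v := by
  rw [srefl, bform_srefl_sroot, srefl]; module

theorem srefl_sroot_self (k : I) : srefl M k (sroot k) = -sroot k := by
  rw [srefl, bform_sroot_sroot, cf_self]; module

theorem srefl_neg (k : I) (v : I → ℝ) : srefl M k (-v) = -srefl M k v := by
  rw [srefl, srefl, bform_neg_left]; module

variable (M) in
noncomputable def sreflEquiv (k : I) : (I → ℝ) ≃ₗ[ℝ] (I → ℝ) where
  toFun := srefl M k
  invFun := srefl M k
  map_add' x y := by simp only [srefl, bform_add_left]; module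
  map_smul' r x := by simp only [srefl, bform_smul_left, RingHom.id_apply]; module
  left_inv := srefl_srefl k
  right_inv := srefl_srefl k

theorem sreflEquiv_apply (k : I) (v : I → ℝ) : sreflEquiv M k v = srefl M k v := rfl

theorem sreflEquiv_mul_pow (hs : M.Small) (i j : I) :
    (sreflEquiv M i * sreflEquiv M j) ^ M.m i j = 1 := by
  by_cases hij : i = j
  · subst hij
    ext v : 1
    rw [M.m_self, pow_one, LinearEquiv.mul_apply, sreflEquiv_apply, sreflEquiv_apply,
      srefl_srefl, LinearEquiv.coe_one, id_eq]
  ext v l : 2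
  rcases hs.m_eq_two_or_three hij with hm | hm <;>
  · simp only [hm, pow_succ, pow_zero, one_mul, LinearEquiv.mul_apply, sreflEquiv_apply,
      srefl_apply, bform_srefl_left, bform_sroot_sroot, cf_self, cf_comm j i, cf_of_m_eq_two,
      cf_of_m_eq_three, LinearEquiv.coe_one, id_eq]
    ring

variable (M) in
def cgen (i : I) : CoxG M := PresentedGroup.of i

/-- The geometric representation of the Coxeter group on `E`. -/
noncomputable def rho (hs : M.Small) : CoxG M →* ((I → ℝ) ≃ₗ[ℝ] (I → ℝ)) :=
  PresentedGroup.toGroup (f := sreflEquiv M) <| by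
    rintro _ ⟨i, j, -, rfl⟩
    simpa only [map_pow, map_mul, FreeGroup.lift_apply_of] using sreflEquiv_mul_pow hs i j

theorem rho_cgen (hs : M.Small) (i : I) : rho hs (cgen M i) = sreflEquiv M i :=
  PresentedGroup.toGroup.of _

variable (M) in
def bformIsometries : Subgroup ((I → ℝ) ≃ₗ[ℝ] (I → ℝ)) where
  carrier := {e | ∀ x y, bform M (e x) (e y) = bform M x y}
  mul_mem' he hf x y := (he _ _).trans (hf x y)
  one_mem' _ _ := rfl
  inv_mem' {e} he x y := by
    simpa using (he (e.symm x) (e.symm y)).symm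

theorem bform_rho (hs : M.Small) (g : CoxG M) (x y : I → ℝ) :
    bform M (rho hs g x) (rho hs g y) = bform M x y :=
  PresentedGroup.generated_by _ ((bformIsometries M).comap (rho hs))
    (fun i x y => by
      change bform M (rho hs (cgen M i) x) _ = _
      rw [rho_cgen]
      exact bform_srefl_srefl i x y) g x y

theorem IsRoot.bform_self {v : I → ℝ} (hv : IsRoot M v) : bform M v v = 2 := by
  induction hv with
  | simple i => rw [bform_sroot_sroot, cf_self]
  | srefl i w _ ih => rwa [bform_srefl_srefl]

theorem IsRoot.neg {v : I → ℝ} (hv : IsRoot M v) : IsRoot M (-v) := by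
  induction hv with
  | simple i => exact srefl_sroot_self (M := M) i ▸ .srefl i _ (.simple i)
  | srefl i w _ ih => exact (srefl_neg (M := M) i w).symm ▸ .srefl i _ ih

section Representation

variable (hs : M.Small)
include hs

theorem IsRoot.exists_rho_apply_sroot {v : I → ℝ} (hv : IsRoot M v) :
    ∃ (g : CoxG M) (k : I), rho hs g (sroot k) = v := by
  induction hv with
  | simple i => exact ⟨1, i, by simp⟩
  | srefl i w _ ih =>
    obtain ⟨g, k, rfl⟩ := ih
    exact ⟨cgen M i * g, k, by rw [map_mul, LinearEquiv.mul_apply, rho_cgen]; rfl⟩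

theorem IsRoot.exists_rho_eq_reflection {α : I → ℝ} (hα : IsRoot M α) :
    ∃ t : CoxG M, ∀ v, rho hs t v = v - bform M v α • α := by
  obtain ⟨g, k, rfl⟩ := hα.exists_rho_apply_sroot hs
  refine ⟨g * cgen M k * g⁻¹, fun v => ?_⟩
  obtain ⟨x, rfl⟩ : ∃ x, rho hs g x = v := ⟨rho hs g⁻¹ v, by
    rw [← LinearEquiv.mul_apply, ← map_mul, mul_inv_cancel, map_one]; rfl⟩
  have hx : rho hs g⁻¹ (rho hs g x) = x := by
    rw [← LinearEquiv.mul_apply, ← map_mul, inv_mul_cancel, map_one]; rfl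
  rw [map_mul, map_mul, LinearEquiv.mul_apply, LinearEquiv.mul_apply, hx, rho_cgen,
    sreflEquiv_apply, LK.srefl, map_sub, map_smul, bform_rho]

/-- `g = s_α s_β` is the product of the reflections along `α` and `β`. -/
theorem IsRoot.exists_rho_rotation {α β : I → ℝ} (hα : IsRoot M α) (hβ : IsRoot M β) :
    ∃ g : CoxG M, rho hs g α = (bform M α β ^ 2 - 1) • α - bform M α β • β ∧
      rho hs g β = bform M α β • α - β := by
  obtain ⟨ta, hta⟩ := hα.exists_rho_eq_reflection hs
  obtain ⟨tb, htb⟩ := hβ.exists_rho_eq_reflection hs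
  have hβα : bform M β α = bform M α β := bform_comm _ _
  refine ⟨ta * tb, ?_, ?_⟩ <;>
  · rw [map_mul, LinearEquiv.mul_apply, htb, hta]
    simp only [bform_sub_left, bform_smul_left, hα.bform_self, hβ.bform_self, hβα]
    module

theorem finite_pos (hsph : Spherical M) : Finite (Pos M) := by
  have : Finite (CoxG M) := hsph
  have hsub : {v | IsPos M v} ⊆ Set.range fun p : CoxG M × I => rho hs p.1 (sroot p.2) := by
    intro v hv
    obtain ⟨g, k, hgk⟩ := hv.1.exists_rho_apply_sroot hs
    exact ⟨(g, k), hgk⟩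
  exact ((Set.finite_range _).subset hsub).to_subtype

theorem bform_le_two (hsph : Spherical M) {α β : I → ℝ} (hα : IsRoot M α) (hβ : IsRoot M β) :
    bform M α β ≤ 2 := by
  by_contra! ht
  have : Finite (CoxG M) := hsph
  obtain ⟨g, hgα, hgβ⟩ := hα.exists_rho_rotation hs hβ
  set t := bform M α β
  set c := rho hs g
  have hcc : c (c α) = (t ^ 2 - 2) • c α - α := by
    rw [hgα, map_sub, map_smul, map_smul, hgα, hgβ]; module
  set u : ℕ → ℝ := fun n => bform M ((c ^ n) α) β
  have hrec : ∀ n, u (n + 2) = (t ^ 2 - 2) * u (n + 1) - u n := by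
    intro n
    simp only [u, pow_add, pow_one, sq, LinearEquiv.mul_apply, hcc, map_sub, map_smul,
      bform_sub_left, bform_smul_left]
  have hu0 : u 0 = t := rfl
  have hu1 : u 1 = t ^ 3 - 3 * t := by
    simp only [u, pow_one, hgα, bform_sub_left, bform_smul_left, hβ.bform_self]; ring
  have hmono : StrictMono u :=
    strictMono_of_chebyshev_recurrence (by nlinarith) hrec (by linarith) (by nlinarith)
  have hc : IsOfFinOrder c := (rho hs).isOfFinOrder (isOfFinOrder_of_finite g)
  have hper : u (orderOf c) = u 0 := by simp [u, pow_orderOf_eq_one]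
  exact hc.orderOf_pos.ne' (hmono.injective hper)

theorem eq_of_bform_eq_two (hsph : Spherical M) {α β : I → ℝ} (hα : IsRoot M α)
    (hβ : IsRoot M β) (h2 : bform M α β = 2) : α = β := by
  have : Finite (CoxG M) := hsph
  obtain ⟨g, hgα, hgβ⟩ := hα.exists_rho_rotation hs hβ
  rw [h2] at hgα hgβ
  have hfix : rho hs g ((2 : ℝ) • (α - β)) = (2 : ℝ) • (α - β) := by
    rw [map_smul, map_sub, hgα, hgβ]; module
  have hshift : rho hs g α = α + (2 : ℝ) • (α - β) := by rw [hgα]; module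
  have h0 := eq_zero_of_apply_eq_add_of_isOfFinOrder
    ((rho hs).isOfFinOrder (isOfFinOrder_of_finite g)) hfix hshift
  rw [smul_eq_zero, sub_eq_zero] at h0
  exact h0.resolve_left two_ne_zero

end Representation

theorem IsPos.exists_bform_sroot_pos {v : I → ℝ} (hv : IsPos M v) :
    ∃ l, 0 < bform M v (sroot l) := by
  by_contra! h
  have : bform M v v ≤ 0 := by
    rw [bform_eq_sum_mul_bform_sroot]
    exact Finset.sum_nonpos fun l _ => mul_nonpos_of_nonneg_of_nonpos (hv.2 l) (h l)
  linarith [hv.1.bform_self]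

def ht (v : I → ℝ) : ℝ := ∑ l, v l

theorem ht_sroot (k : I) : ht (sroot k) = 1 := by
  simp [ht, sroot]

theorem ht_srefl (k : I) (v : I → ℝ) : ht (srefl M k v) = ht v - bform M v (sroot k) := by
  simp only [ht, srefl, Pi.sub_apply, Pi.smul_apply, smul_eq_mul, Finset.sum_sub_distrib,
    ← Finset.mul_sum]
  rw [show ∑ l, sroot k l = 1 from ht_sroot k, mul_one]

theorem IsPos.ht_pos {v : I → ℝ} (hv : IsPos M v) : 0 < ht v := by
  have hne : v ≠ 0 := fun h => by simpa [h, bform] using hv.1.bform_self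
  obtain ⟨l, hl⟩ := Function.ne_iff.mp hne
  exact Finset.sum_pos' (fun l _ => hv.2 l)
    ⟨l, Finset.mem_univ l, lt_of_le_of_ne (hv.2 l) (Ne.symm hl)⟩

section PositiveRoots

variable (hs : M.Small)
include hs

theorem IsRoot.exists_int_bform_sroot {v : I → ℝ} (hv : IsRoot M v) (k : I) :
    ∃ z : ℤ, bform M v (sroot k) = z := by
  induction hv generalizing k with
  | simple i => rw [bform_sroot_sroot]; exact hs.exists_int_cf i k
  | srefl i w _ ih =>
    obtain ⟨z₁, h₁⟩ := ih k
    obtain ⟨z₂, h₂⟩ := ih i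
    obtain ⟨z₃, h₃⟩ := hs.exists_int_cf i k
    exact ⟨z₁ - z₂ * z₃, by rw [bform_srefl_left, bform_sroot_sroot, h₁, h₂, h₃]; push_cast; ring⟩

theorem IsRoot.exists_int_apply {v : I → ℝ} (hv : IsRoot M v) (l : I) : ∃ z : ℤ, v l = z := by
  have hsroot : ∀ k, ∃ z : ℤ, sroot k l = z := fun k => by
    by_cases h : l = k
    · exact ⟨1, by simp [sroot, h]⟩
    · exact ⟨0, by simp [sroot, h]⟩
  induction hv with
  | simple i => exact hsroot i
  | srefl i w hw ih =>
    obtain ⟨z₁, h₁⟩ := ih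
    obtain ⟨z₂, h₂⟩ := hw.exists_int_bform_sroot hs i
    obtain ⟨z₃, h₃⟩ := hsroot i
    exact ⟨z₁ - z₂ * z₃, by rw [srefl_apply, h₁, h₂, h₃]; push_cast; ring⟩

theorem IsRoot.one_le_bform_sroot {v : I → ℝ} (hv : IsRoot M v) {k : I}
    (h : 0 < bform M v (sroot k)) : 1 ≤ bform M v (sroot k) := by
  obtain ⟨z, hz⟩ := hv.exists_int_bform_sroot hs k
  rw [hz] at h ⊢
  exact_mod_cast (Int.cast_pos.mp h : 0 < z)

variable (hsph : Spherical M)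
include hsph

theorem IsRoot.bform_sroot_le_one {v : I → ℝ} (hv : IsRoot M v) {k : I} (hne : v ≠ sroot k) :
    bform M v (sroot k) ≤ 1 := by
  have hle := bform_le_two hs hsph hv (IsRoot.simple k)
  have hne2 : bform M v (sroot k) ≠ 2 := fun h => hne (eq_of_bform_eq_two hs hsph hv (.simple k) h)
  obtain ⟨z, hz⟩ := hv.exists_int_bform_sroot hs k
  rw [hz] at hle hne2 ⊢
  have : z ≤ 2 := by exact_mod_cast hle
  have : z ≠ 2 := fun h => hne2 (by rw [h]; norm_num)
  exact_mod_cast (by omega : z ≤ 1)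

theorem IsPos.neg_one_le_bform_sroot {v : I → ℝ} (hv : IsPos M v) (k : I) :
    -1 ≤ bform M v (sroot k) := by
  have hne : -v ≠ sroot k := fun h => by
    have := hv.2 k
    rw [← neg_neg v, h] at this
    norm_num [sroot] at this
  have := hv.1.neg.bform_sroot_le_one hs hsph hne
  rw [bform_neg_left] at this
  linarith

theorem IsPos.isPos_srefl {v : I → ℝ} (hv : IsPos M v) {k : I} (hne : v ≠ sroot k) :
    IsPos M (srefl M k v) := by
  refine ⟨.srefl k v hv.1, fun l => ?_⟩
  rw [srefl_apply]
  by_cases hl : l = k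
  · subst hl
    rw [sroot_self, mul_one, sub_nonneg]
    obtain ⟨z, hz⟩ := hv.1.exists_int_apply hs l
    have hz0 : 0 ≤ z := by
      have := hv.2 l
      rw [hz] at this
      exact_mod_cast this
    rcases hz0.eq_or_lt with h0 | hpos
    · rw [hz, ← h0, Int.cast_zero, bform_comm, bform_sroot_left]
      refine Finset.sum_nonpos fun j _ => ?_
      by_cases hj : j = l
      · rw [hj, hz, ← h0]; simp
      · exact mul_nonpos_of_nonneg_of_nonpos (hv.2 j) (hs.cf_nonpos (Ne.symm hj))
    · have : (1 : ℝ) ≤ v l := by rw [hz]; exact_mod_cast hpos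
      linarith [hv.1.bform_sroot_le_one hs hsph hne]
  · simp [sroot, hl, hv.2 l]

theorem IsPos.exists_list_length_le_ht {v : I → ℝ} (hv : IsPos M v) :
    ∃ L : List I, (L.length : ℝ) ≤ ht v ∧ ∃ k, L.foldr (srefl M) v k < 0 := by
  obtain ⟨N, hN⟩ := exists_nat_ge (ht v)
  induction N generalizing v with
  | zero => exact absurd hN (not_le.mpr (by exact_mod_cast hv.ht_pos))
  | succ N ih =>
    by_cases hsimple : ∃ k, v = sroot k
    · obtain ⟨k, rfl⟩ := hsimple
      refine ⟨[k], by simp [ht_sroot], k, ?_⟩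
      rw [List.foldr_cons, List.foldr_nil, srefl_sroot_self, Pi.neg_apply, sroot_self]
      norm_num
    simp only [not_exists] at hsimple
    obtain ⟨l, hl⟩ := hv.exists_bform_sroot_pos
    have h1 := hv.1.one_le_bform_sroot hs hl
    obtain ⟨L, hL, k, hk⟩ := ih (hv.isPos_srefl hs hsph (hsimple l)) (by
      rw [ht_srefl]; push_cast at hN; linarith)
    refine ⟨L ++ [l], ?_, k, by rwa [List.foldr_append]⟩
    rw [ht_srefl] at hL
    simp only [List.length_append, List.length_singleton, Nat.cast_add, Nat.cast_one]
    linarith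

theorem IsPos.ht_le_length {v : I → ℝ} (hv : IsPos M v) {L : List I} {k : I}
    (hL : L.foldr (srefl M) v k < 0) : ht v ≤ L.length := by
  induction L using List.reverseRecOn generalizing v with
  | nil => exact absurd hL (not_lt.mpr (hv.2 k))
  | append_singleton L l ih =>
    rw [List.foldr_append, List.foldr_cons, List.foldr_nil] at hL
    simp only [List.length_append, List.length_singleton, Nat.cast_add, Nat.cast_one]
    by_cases hvl : v = sroot l
    · rw [hvl, ht_sroot]; simp
    · have := ih (hv.isPos_srefl hs hsph hvl) hL
      rw [ht_srefl] at this
      linarith [hv.1.bform_sroot_le_one hs hsph hvl]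

/-- `s_k` lowers the height of `α ≠ α_k` by `(α|α_k) ≤ 1`, and by exactly `1` for some `k`
unless `α` is simple. -/
theorem IsPos.dep_eq_ht {v : I → ℝ} (hv : IsPos M v) : (dep M v : ℝ) = ht v := by
  obtain ⟨L, hL, k, hk⟩ := hv.exists_list_length_le_ht hs hsph
  have hmem : L.length ∈ {n | ∃ l : List I, l.length = n ∧ ∃ k, l.foldr (srefl M) v k < 0} :=
    ⟨L, rfl, k, hk⟩
  obtain ⟨L', hL', k', hk'⟩ := Nat.sInf_mem ⟨_, hmem⟩
  apply le_antisymm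
  · exact (Nat.cast_le.mpr (Nat.sInf_le hmem)).trans hL
  · rw [dep, ← hL']
    exact hv.ht_le_length hs hsph hk'

theorem IsPos.dep_srefl {v : I → ℝ} (hv : IsPos M v) {k : I} (hne : v ≠ sroot k) :
    (dep M (srefl M k v) : ℝ) = dep M v - bform M v (sroot k) := by
  rw [(hv.isPos_srefl hs hsph hne).dep_eq_ht hs hsph, hv.dep_eq_ht hs hsph, ht_srefl]

theorem IsPos.dep_srefl_lt {v : I → ℝ} (hv : IsPos M v) {k : I} (hne : v ≠ sroot k)
    (h : 0 < bform M v (sroot k)) : dep M (srefl M k v) < dep M v := by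
  have := hv.dep_srefl hs hsph hne
  exact_mod_cast (by linarith : (dep M (srefl M k v) : ℝ) < dep M v)

theorem IsPos.dep_lt_dep_srefl {v : I → ℝ} (hv : IsPos M v) {k : I}
    (h : bform M v (sroot k) < 0) : dep M v < dep M (srefl M k v) := by
  have hne : v ≠ sroot k := fun he => by
    rw [he, bform_sroot_sroot, cf_self] at h; norm_num at h
  have := hv.dep_srefl hs hsph hne
  exact_mod_cast (by linarith : (dep M v : ℝ) < dep M (srefl M k v))

end PositiveRoots

theorem srefl_eq_self_iff {k : I} {v : I → ℝ} : srefl M k v = v ↔ bform M v (sroot k) = 0 := by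
  simp [srefl, sroot]

section LKRepresentation

variable {R : Type} [CommRing R] {a b c d : R}

theorem phi_ev (i : I) (α : Pos M) : phi M R a b c d i (ev M R α) = phiAux M R a b c d i α := by
  rw [phi, ev, Finsupp.lift_apply, Finsupp.sum_single_index (by exact zero_smul R _), one_smul]

theorem phi_ev_of_eq_sroot {i : I} {α : Pos M} (h : α.1 = sroot i) :
    phi M R a b c d i (ev M R α) = 0 := by
  rw [phi_ev, phiAux, if_pos h]

theorem phi_ev_of_bform_eq_zero {i : I} {α : Pos M} (h : bform M α.1 (sroot i) = 0) :
    phi M R a b c d i (ev M R α) = d • ev M R α := by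
  have hne : α.1 ≠ sroot i := fun he => by simp [he, bform_sroot_sroot, cf_self] at h
  rw [phi_ev, phiAux, if_neg hne, if_pos (srefl_eq_self_iff.mpr h)]

variable (hs : M.Small) (hsph : Spherical M)
include hs hsph

theorem phi_ev_of_bform_pos {i : I} {α : Pos M} (hne : α.1 ≠ sroot i)
    (h : 0 < bform M α.1 (sroot i)) (hβ : IsPos M (srefl M i α.1)) :
    phi M R a b c d i (ev M R α) = b • ev M R ⟨srefl M i α.1, hβ⟩ := by
  rw [phi_ev, phiAux, if_neg hne, if_neg (srefl_eq_self_iff.not.mpr h.ne'), dif_pos hβ,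
    if_neg (α.2.dep_srefl_lt hs hsph hne h).asymm]

theorem phi_ev_of_bform_neg {i : I} {α : Pos M} (h : bform M α.1 (sroot i) < 0)
    (hβ : IsPos M (srefl M i α.1)) :
    phi M R a b c d i (ev M R α) = a • ev M R α + c • ev M R ⟨srefl M i α.1, hβ⟩ := by
  have hne : α.1 ≠ sroot i := fun he => by
    rw [he, bform_sroot_sroot, cf_self] at h; norm_num at h
  rw [phi_ev, phiAux, if_neg hne, if_neg (srefl_eq_self_iff.not.mpr h.ne), dif_pos hβ,
    if_pos (α.2.dep_lt_dep_srefl hs hsph h)]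

theorem apply_phi_ev_eq_zero_of_bform_nonneg {h : VV M R →ₗ[R] R} {i : I} {β : Pos M}
    (hvan : ∀ γ : Pos M, dep M γ.1 ≤ dep M β.1 → h (ev M R γ) = 0)
    (hβi : 0 ≤ bform M β.1 (sroot i)) : h (phi M R a b c d i (ev M R β)) = 0 := by
  rcases hβi.eq_or_lt with h0 | hpos
  · rw [phi_ev_of_bform_eq_zero h0.symm, map_smul, hvan β le_rfl, smul_zero]
  by_cases hβs : β.1 = sroot i
  · rw [phi_ev_of_eq_sroot hβs, map_zero]
  rw [phi_ev_of_bform_pos hs hsph hβs hpos (β.2.isPos_srefl hs hsph hβs), map_smul,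
    hvan ⟨_, β.2.isPos_srefl hs hsph hβs⟩ (β.2.dep_srefl_lt hs hsph hβs hpos).le, smul_zero]

variable {g : I → (VV M R →ₗ[R] R)}

/-- The induction step when `α` has a descent `k ≠ i`: apply the relation between `f_i` and
`φ_k` to `e_{s_k(α)}`. -/
theorem IsLK.apply_ev_eq_zero_of_descent (hlk : IsLK M R a b c d g) (hc : IsUnit c)
    {α : Pos M} {i k : I} (hki : k ≠ i) (hne : α.1 ≠ sroot k) (hk : 0 < bform M α.1 (sroot k))
    (ih : ∀ γ : Pos M, dep M γ.1 < dep M α.1 → ∀ j, g j (ev M R γ) = 0) :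
    g i (ev M R α) = 0 := by
  set β : Pos M := ⟨srefl M k α.1, α.2.isPos_srefl hs hsph hne⟩
  have hk1 := α.2.1.one_le_bform_sroot hs hk
  have hβlt : dep M β.1 < dep M α.1 := α.2.dep_srefl_lt hs hsph hne hk
  have hφ : phi M R a b c d k (ev M R β) = a • ev M R β + c • ev M R α := by
    have hβk : bform M β.1 (sroot k) < 0 := by
      simp only [β, bform_srefl_sroot]; linarith
    have hα : IsPos M (srefl M k β.1) := (srefl_srefl k α.1).symm ▸ α.2
    rw [phi_ev_of_bform_neg hs hsph hβk hα]
    congr 3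
    exact Subtype.ext (srefl_srefl k α.1)
  have hgβ : ∀ j, g j (ev M R β) = 0 := ih β hβlt
  suffices c * g i (ev M R α) = 0 from hc.mul_right_eq_zero.mp this
  rcases hs.m_eq_two_or_three hki.symm with hm | hm
  · simpa [hφ, hgβ] using LinearMap.congr_fun (hlk.rel2 i k hm) (ev M R β)
  · have hβi : 0 ≤ bform M β.1 (sroot i) := by
      simp only [β, bform_srefl_left, bform_sroot_sroot, cf_of_m_eq_three (M.symm k i ▸ hm)]
      linarith [α.2.neg_one_le_bform_sroot hs hsph i]
    have hrel := LinearMap.congr_fun (hlk.rel3 i k hm) (ev M R β)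
    rw [LinearMap.comp_apply, LinearMap.comp_apply, hφ,
      apply_phi_ev_eq_zero_of_bform_nonneg hs hsph (fun γ hγ => ih γ (hγ.trans_lt hβlt) k) hβi]
      at hrel
    simpa [hgβ] using hrel

/-- The induction step when `i` is the only descent of `α`: `β = s_i(α)` pairs positively with
some `α_l`, and then `m i l = 3` and `(α|α_l) = 0`; apply the relation between `f_i` and `φ_l`
to `e_α`. -/
theorem IsLK.apply_ev_eq_zero_of_bform_nonpos (hlk : IsLK M R a b c d g) (hd : IsUnit d)
    {α : Pos M} {i : I} (hne : α.1 ≠ sroot i)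
    (hdesc : ∀ k, k ≠ i → bform M α.1 (sroot k) ≤ 0)
    (ih : ∀ γ : Pos M, dep M γ.1 < dep M α.1 → ∀ j, g j (ev M R γ) = 0) :
    g i (ev M R α) = 0 := by
  have hi : 0 < bform M α.1 (sroot i) := by
    obtain ⟨l, hl⟩ := α.2.exists_bform_sroot_pos
    by_cases hli : l = i
    · rwa [← hli]
    · exact absurd hl (not_lt.mpr (hdesc l hli))
  have hi1 : bform M α.1 (sroot i) = 1 :=
    le_antisymm (α.2.1.bform_sroot_le_one hs hsph hne) (α.2.1.one_le_bform_sroot hs hi)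
  set β : Pos M := ⟨srefl M i α.1, α.2.isPos_srefl hs hsph hne⟩
  have hβlt : dep M β.1 < dep M α.1 := α.2.dep_srefl_lt hs hsph hne hi
  obtain ⟨l, hl⟩ := β.2.exists_bform_sroot_pos
  have hβl : bform M β.1 (sroot l) = bform M α.1 (sroot l) - cf M i l := by
    simp only [β, bform_srefl_left, hi1, bform_sroot_sroot, one_mul]
  have hli : l ≠ i := by
    rintro rfl
    rw [hβl, hi1, cf_self] at hl
    norm_num at hl
  have hm : M.m i l = 3 := by
    refine (hs.m_eq_two_or_three hli.symm).resolve_left fun hm => ?_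
    rw [hβl, cf_of_m_eq_two hm] at hl
    linarith [hdesc l hli]
  have hαl : bform M α.1 (sroot l) = 0 := by
    rw [hβl, cf_of_m_eq_three hm] at hl
    obtain ⟨z, hz⟩ := α.2.1.exists_int_bform_sroot hs l
    have hle := hdesc l hli
    rw [hz] at hl hle ⊢
    have h1 : -1 < z := by exact_mod_cast (show ((-1 : ℤ) : ℝ) < z by push_cast; linarith)
    have h2 : z ≤ 0 := by exact_mod_cast hle
    exact_mod_cast (by omega : z = 0)
  have hrel := LinearMap.congr_fun (hlk.rel3 i l hm) (ev M R α)
  rw [LinearMap.comp_apply, LinearMap.comp_apply, phi_ev_of_bform_eq_zero hαl,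
    phi_ev_of_bform_pos hs hsph hne hi β.2, map_smul, map_smul, ih β hβlt l, smul_zero] at hrel
  exact hd.mul_right_eq_zero.mp hrel

theorem IsLK.eq_zero_of_apply_simplePos (hlk : IsLK M R a b c d g) (hc : IsUnit c)
    (hd : IsUnit d) (hdiag : ∀ i, g i (ev M R (simplePos M i)) = 0) : g = 0 := by
  suffices key : ∀ (α : Pos M) i, g i (ev M R α) = 0 by
    funext i
    refine Finsupp.lhom_ext fun α r => ?_
    rw [Pi.zero_apply, LinearMap.zero_apply, ← Finsupp.smul_single_one, map_smul]
    change r • g i (ev M R α) = 0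
    rw [key, smul_zero]
  intro α
  induction hn : dep M α.1 using Nat.strong_induction_on generalizing α with
  | _ n ih =>
  have ih' : ∀ γ : Pos M, dep M γ.1 < dep M α.1 → ∀ j, g j (ev M R γ) = 0 :=
    fun γ hγ => ih _ (hn ▸ hγ) γ rfl
  intro i
  by_cases hsimple : ∃ j, α = simplePos M j
  · obtain ⟨j, rfl⟩ := hsimple
    by_cases hij : i = j
    · exact hij ▸ hdiag i
    · exact hlk.diag i j hij
  have hne : ∀ j, α.1 ≠ sroot j := fun j h => hsimple ⟨j, Subtype.ext h⟩
  by_cases hdesc : ∃ k, k ≠ i ∧ 0 < bform M α.1 (sroot k)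
  · obtain ⟨k, hki, hk⟩ := hdesc
    exact hlk.apply_ev_eq_zero_of_descent hs hsph hc hki (hne k) hk ih'
  · exact hlk.apply_ev_eq_zero_of_bform_nonpos hs hsph hd (hne i)
      (fun k hki => not_lt.mp fun hk => hdesc ⟨k, hki, hk⟩) ih'

end LKRepresentation

theorem trace_psim {R : Type} [CommRing R] [Finite (Pos M)] (a b c d : R)
    (f : I → (VV M R →ₗ[R] R)) (i : I) :
    LinearMap.trace R _ (psim M R a b c d f i) =
      LinearMap.trace R _ (phi M R a b c d i) + f i (ev M R (simplePos M i)) := by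
  rw [psim, map_add, LinearMap.trace_smulRight]

end LK

open LK in
theorem statement_11_general {I : Type} [Fintype I] [DecidableEq I] (M : CoxM I)
    (hsmall : M.Small) (hsph : Spherical M)
    (R : Type) [CommRing R] (b c d : R) (hc : IsUnit c) (hd : IsUnit d)
    (a : R)
    (f f' : I → (VV M R →ₗ[R] R)) (hf : IsLK M R a b c d f) (hf' : IsLK M R a b c d f')
    (hne : f ≠ f')
    (psi psi' : AM M →* Module.End R (VV M R))
    (hpsi : ∀ i : I, psi (gen M i) = psim M R a b c d f i)
    (hpsi' : ∀ i : I, psi' (gen M i) = psim M R a b c d f' i) :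
    ¬ ∃ nu : VV M R ≃ₗ[R] VV M R, ∀ (x : AM M) (v : VV M R),
        psi' x v = nu (psi x (nu.symm v)) := by
  rintro ⟨nu, hnu⟩
  have : Finite (Pos M) := finite_pos hsmall hsph
  have hdiag : ∀ i, (f - f') i (ev M R (simplePos M i)) = 0 := fun i => by
    have hconj : psi' (gen M i) = nu.conj (psi (gen M i)) := LinearMap.ext (hnu (gen M i))
    have htr := congrArg (LinearMap.trace R _) hconj
    rw [LinearMap.trace_conj', hpsi, hpsi', trace_psim, trace_psim, add_right_inj] at htr
    rw [Pi.sub_apply, LinearMap.sub_apply, htr, sub_self]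
  have hlk : IsLK M R a b c d (f - f') := (LKFamilies M R a b c d).sub_mem hf hf'
  exact hne (sub_eq_zero.mp (hlk.eq_zero_of_apply_simplePos hsmall hsph hc hd hdiag))

open LK in
/-- in the connected spherical case, distinct LK-families give
non-equivalent LK-representations. -/
theorem statement_11 {I : Type} [Fintype I] [DecidableEq I] [Nonempty I] (M : CoxM I)
    (hsmall : M.Small) (hconn : Connected M) (hsph : Spherical M)
    (R : Type) [CommRing R] (b c d : R) (hb : IsUnit b) (hc : IsUnit c) (hd : IsUnit d)
    (a : R) (ha : a = d - b * c * Ring.inverse d)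
    (f f' : I → (VV M R →ₗ[R] R)) (hf : IsLK M R a b c d f) (hf' : IsLK M R a b c d f')
    (hne : f ≠ f')
    (psi psi' : AM M →* Module.End R (VV M R))
    (hpsi : ∀ i : I, psi (gen M i) = psim M R a b c d f i)
    (hpsi' : ∀ i : I, psi' (gen M i) = psim M R a b c d f' i) :
    ¬ ∃ nu : VV M R ≃ₗ[R] VV M R, ∀ (x : AM M) (v : VV M R),
        psi' x v = nu (psi x (nu.symm v)) :=
  statement_11_general M hsmall hsph R b c d hc hd a f f' hf hf' hne psi psi' hpsi hpsi'
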